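/- Let d ∈ ℕ, p ∈ (0,∞), and β ∈ ℝ with β < −d/p. Then there is a constant C > 0 depending only on d, β and p such that for every family (ξ_{j,t,m})_{j∈ℕ₀, t∈{F,M}^d, m∈ℤ^d} of real numbers, every j ∈ ℕ₀ and every t ∈ {F,M}^d one has Z_{j,t} := (Σ_{m∈ℤ^d} (1 + ‖m‖_∞/2^j)^{βp} |ξ_{j,t,m}|^p)^{1/p} ≤ C · 2^{jd/p} · Ξ^{1/p} (an inequality in [0,∞]). -/

import Mathlib

open MeasureTheory ProbabilityTheory ENNReal

noncomputable section

/-- The sup-norm `‖m‖_∞` of a lattice point `m ∈ ℤ^d`, as a real number. -/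
def znorm {d : ℕ} (m : Fin d → ℤ) : ℝ :=
  ((Finset.univ.sup fun i => (m i).natAbs : ℕ) : ℝ)

/-- `M_j = (2^{j+1}+1)^d`. -/
def Mnum (d j : ℕ) : ℕ := (2 ^ (j + 1) + 1) ^ d

/-- `N_j = M_{j+1} - M_j`. -/
def Nnum (d j : ℕ) : ℕ := Mnum d (j + 1) - Mnum d j

/-- The `ℓ^p`-norm (with values in `[0,∞]`) of a family of values in `[0,∞]`,
for `p ∈ (0,∞]`. -/
def lpNorm (p : ℝ≥0∞) {ι : Type*} (x : ι → ℝ≥0∞) : ℝ≥0∞ :=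
  if p = ∞ then ⨆ i, x i else (∑' i, x i ^ p.toReal) ^ (1 / p.toReal)

/-- The index set `{(j,t) : j ∈ ℕ₀, t ∈ T_j}` where `T_0 = {F}^d` and
`T_j = {F,M}^d \ {F}^d` for `j ≥ 1`; here `F = false`, `M = true`. -/
def JIdx (d : ℕ) : Type :=
  {jt : ℕ × (Fin d → Bool) // (jt.2 = fun _ => false) ↔ jt.1 = 0}

/-- The Besov sequence (quasi-)norm `‖a‖_{b^s_{p,q}}`, with values in `[0,∞]`,
where `d/p` is read as `0` for `p = ∞`. -/
def besovNorm (d : ℕ) (s : ℝ) (p q : ℝ≥0∞)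
    (a : ℕ → (Fin d → Bool) → (Fin d → ℤ) → ℝ) : ℝ≥0∞ :=
  lpNorm q (fun jt : JIdx d =>
    ENNReal.ofReal ((2 : ℝ) ^ ((jt.1.1 : ℝ) * (s + d / 2 - d * (p⁻¹).toReal))) *
      lpNorm p fun m : Fin d → ℤ => ENNReal.ofReal |a jt.1.1 jt.1.2 m|)

/-- The deterministic coefficient `2^{jα} (j+1)^θ (1+‖m‖_∞/2^j)^{β+(γ-β)𝟙_{j=0}}`
of the Besov sequence prior. -/
def priorCoef (d : ℕ) (α β γ θ : ℝ) (j : ℕ) (m : Fin d → ℤ) : ℝ :=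
  (2 : ℝ) ^ ((j : ℝ) * α) * ((j : ℝ) + 1) ^ θ *
    (1 + znorm m / 2 ^ j) ^ (if j = 0 then γ else β)

/-- The deterministic coefficient `2^{jα} (1+‖m‖_∞/2^j)^{β+(γ-β)𝟙_{j=0}}`
of the Bernoulli–Besov sequence prior. -/
def priorCoefB (d : ℕ) (α β γ : ℝ) (j : ℕ) (m : Fin d → ℤ) : ℝ :=
  (2 : ℝ) ^ ((j : ℝ) * α) * (1 + znorm m / 2 ^ j) ^ (if j = 0 then γ else β)

/-- The Bernoulli success probability `ϱ_{j,m} = 2^{jμ}(1+‖m‖_∞/2^j)^ν`. -/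
def rhoB (d : ℕ) (μ' ν : ℝ) (j : ℕ) (m : Fin d → ℤ) : ℝ :=
  (2 : ℝ) ^ ((j : ℝ) * μ') * (1 + znorm m / 2 ^ j) ^ ν

/-- Property A. -/
def PropertyA (d : ℕ) (s α β γ θ : ℝ) (p q : ℝ≥0∞) : Prop :=
  (if p = ∞ then γ ≤ 0 else γ < -((d : ℝ) / p.toReal)) ∧
  (if p = ∞ then β ≤ 0 else β < -((d : ℝ) / p.toReal)) ∧
  (s + d / 2 + α < 0 ∨
    (s + d / 2 + α = 0 ∧ (if q = ∞ then θ ≤ 0 else θ < -(1 / q.toReal))))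

/-- Property A'. -/
def PropertyA' (d : ℕ) (s α β γ μ' ν : ℝ) (p q : ℝ≥0∞) : Prop :=
  if p = ∞ then
    γ ≤ 0 ∧ β ≤ 0 ∧
      (if q = ∞ then s + d / 2 + α ≤ 0 else s + d / 2 + α < 0)
  else
    γ + (d + ν) / p.toReal < 0 ∧ β + (d + ν) / p.toReal < 0 ∧
      (if q = ∞ then s + d / 2 + α + μ' / p.toReal ≤ 0
        else s + d / 2 + α + μ' / p.toReal < 0)

/-- Property A''. -/
def PropertyA'' (d : ℕ) (s α β γ μ' ν r : ℝ) (p : ℝ≥0∞) : Prop :=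
  if p = ∞ then γ ≤ 0 ∧ β ≤ 0 ∧ s + d / 2 + α ≤ 0
  else
    γ + (d : ℝ) / p.toReal + ν / max r p.toReal < 0 ∧
    β + (d : ℝ) / p.toReal + ν / max r p.toReal < 0 ∧
    s + (d : ℝ) / 2 + α + μ' / max r p.toReal < 0

/-- The quantity `Ξ = max_t Ξ_t` from the master lemma, for a deterministic family `ξ`,
an exponent `pr ∈ (0,∞)` and an enumeration `φ` of `ℤ^d`. -/
def XiQ (d : ℕ) (pr : ℝ) (φ : ℕ → Fin d → ℤ)
    (ξ : ℕ → (Fin d → Bool) → (Fin d → ℤ) → ℝ) : ℝ≥0∞ :=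
  ⨆ t : Fin d → Bool, ⨆ j : ℕ,
    (ENNReal.ofReal ((Mnum d j : ℝ)⁻¹ *
        ∑ τ ∈ Finset.range (Mnum d j), |ξ j t (φ τ)| ^ pr) +
      ⨆ ℓ : ℕ, ⨆ _ : j ≤ ℓ,
        ENNReal.ofReal ((Nnum d ℓ : ℝ)⁻¹ *
          ∑ τ ∈ Finset.Ico (Mnum d ℓ) (Mnum d (ℓ + 1)), |ξ j t (φ τ)| ^ pr))

/-- The quantity `Ξ̃ = max_t Ξ̃_t` from the Bernoulli master lemma. -/
def XiB (d : ℕ) (pr r μ' ν δ : ℝ) (φ : ℕ → Fin d → ℤ)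
    (lam ξ : ℕ → (Fin d → Bool) → (Fin d → ℤ) → ℝ) : ℝ≥0∞ :=
  ⨆ t : Fin d → Bool, ⨆ j : ℕ,
    (ENNReal.ofReal ((Mnum d j : ℝ)⁻¹ *
        ∑ τ ∈ Finset.range (Mnum d j),
          rhoB d μ' ν j (φ τ) ^ (pr / max r pr * (δ - 1)) * lam j t (φ τ) *
            |ξ j t (φ τ)| ^ pr) +
      ⨆ ℓ : ℕ, ⨆ _ : j ≤ ℓ,
        ENNReal.ofReal ((Nnum d ℓ : ℝ)⁻¹ *
          ∑ τ ∈ Finset.Ico (Mnum d ℓ) (Mnum d (ℓ + 1)),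
            rhoB d μ' ν j (φ τ) ^ (pr / max r pr * (δ - 1)) * lam j t (φ τ) *
              |ξ j t (φ τ)| ^ pr))

/-- `exp(c · x^r)` for `x ∈ [0,∞]`, equal to `∞` for `x = ∞`. -/
def expENN (c r : ℝ) (x : ℝ≥0∞) : ℝ≥0∞ :=
  if x = ∞ then ∞ else ENNReal.ofReal (Real.exp (c * x.toReal ^ r))


lemma znorm_nonneg' {d : ℕ} (m : Fin d → ℤ) : 0 ≤ znorm m := Nat.cast_nonneg _

lemma Mnum_pos (d j : ℕ) : 0 < Mnum d j :=
  pow_pos (by positivity) d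

lemma Mnum_mono (d : ℕ) {j j' : ℕ} (h : j ≤ j') : Mnum d j ≤ Mnum d j' := by
  apply Nat.pow_le_pow_left
  have : (2:ℕ) ^ (j+1) ≤ 2 ^ (j'+1) := Nat.pow_le_pow_right (by norm_num) (by omega)
  omega

lemma Nnum_pos {d : ℕ} (hd : 0 < d) (ℓ : ℕ) : 0 < Nnum d ℓ := by
  have h : Mnum d ℓ < Mnum d (ℓ + 1) := by
    have key : (2:ℕ) ^ (ℓ+1) + 1 < 2 ^ (ℓ+2) + 1 := by
      have h2 : (2:ℕ) ^ (ℓ+1) < 2 ^ (ℓ+2) := Nat.pow_lt_pow_right one_lt_two (Nat.lt_succ_self _)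
      omega
    unfold Mnum
    exact Nat.pow_lt_pow_left key hd.ne'
  unfold Nnum
  omega

lemma Mnum_le (d j : ℕ) : Mnum d j ≤ 3 ^ d * 2 ^ (j * d) := by
  have h : (2:ℕ) ^ (j+1) + 1 ≤ 3 * 2 ^ j := by
    have : (1:ℕ) ≤ 2 ^ j := Nat.one_le_two_pow
    have : (2:ℕ) ^ (j+1) = 2 * 2 ^ j := by ring
    omega
  calc Mnum d j ≤ (3 * 2 ^ j) ^ d := Nat.pow_le_pow_left h d
    _ = 3 ^ d * 2 ^ (j * d) := by rw [mul_pow, ← pow_mul]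

lemma le_Mnum {d : ℕ} (hd : 0 < d) (j n : ℕ) : n ≤ Mnum d (j + n) := by
  have h1 : 2 ^ (j + n + 1) + 1 ≤ Mnum d (j + n) :=
    Nat.le_self_pow hd.ne' _
  have h2 : n < 2 ^ n := Nat.lt_two_pow_self
  have h3 : (2:ℕ) ^ n ≤ 2 ^ (j + n + 1) := Nat.pow_le_pow_right (by norm_num) (by omega)
  omega

/-- If `τ ≥ M_ℓ` then `‖φ(τ)‖_∞ ≥ 2^ℓ`, for a norm-nondecreasing enumeration `φ`. -/
lemma znorm_lb {d : ℕ} (φ : ℕ → Fin d → ℤ) (hinj : Function.Injective φ)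
    (hmono : Monotone fun τ => znorm (φ τ)) {ℓ τ : ℕ} (hτ : Mnum d ℓ ≤ τ) :
    (2 : ℝ) ^ ℓ ≤ znorm (φ τ) := by
  by_contra hcon
  push_neg at hcon
  set R : ℕ := 2 ^ ℓ with hR
  have hsup : ∀ σ ≤ τ, ∀ i, (φ σ i).natAbs ≤ R := by
    intro σ hσ i
    have h1 : znorm (φ σ) ≤ znorm (φ τ) := hmono hσ
    have h2 : znorm (φ σ) < (R : ℝ) := by
      refine lt_of_le_of_lt h1 ?_
      rw [hR]; push_cast; exact hcon
    have h3 : (Finset.univ.sup fun i => (φ σ i).natAbs) < R := by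
      unfold znorm at h2; exact_mod_cast h2
    have h4 : (φ σ i).natAbs ≤ Finset.univ.sup fun i => (φ σ i).natAbs :=
      Finset.le_sup (f := fun i => (φ σ i).natAbs) (Finset.mem_univ i)
    omega
  have hmaps : ∀ σ ∈ Finset.range (τ + 1),
      φ σ ∈ Fintype.piFinset fun _ : Fin d => Finset.Icc (-(R : ℤ)) (R : ℤ) := by
    intro σ hσ
    rw [Fintype.mem_piFinset]
    intro i
    rw [Finset.mem_Icc]
    have := hsup σ (by simpa [Nat.lt_succ_iff] using Finset.mem_range.mp hσ) i
    omega
  have hcard := Finset.card_le_card_of_injOn φ hmaps hinj.injOn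
  rw [Finset.card_range, Fintype.card_piFinset] at hcard
  have hIcc : (Finset.Icc (-(R : ℤ)) (R : ℤ)).card = 2 * R + 1 := by
    rw [Int.card_Icc]
    omega
  rw [Finset.prod_const, hIcc, Finset.card_univ, Fintype.card_fin] at hcard
  have hMR : Mnum d ℓ = (2 * R + 1) ^ d := by
    unfold Mnum
    rw [hR]
    ring_nf
  omega

lemma two_rpow_natCast_mul (a b : ℕ) : ((2:ℝ) ^ (a * b : ℕ)) = (2:ℝ) ^ (((a:ℝ)) * b) := by
  rw [← Real.rpow_natCast 2 (a * b)]
  push_cast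
  ring_nf

lemma shell_real_bound (d : ℕ) (p β : ℝ) (j ℓ : ℕ) (hℓ : j ≤ ℓ) :
    (2:ℝ) ^ (((ℓ:ℝ) - j) * (β * p)) * (Nnum d ℓ : ℝ) ≤
      3 ^ d * 2 ^ d * 2 ^ ((j:ℝ) * d) * ((2:ℝ) ^ ((d:ℝ) + β * p)) ^ (ℓ - j) := by
  obtain ⟨k, rfl⟩ : ∃ k, ℓ = j + k := ⟨ℓ - j, by omega⟩
  have hN : (Nnum d (j+k) : ℝ) ≤ 3 ^ d * 2 ^ ((j+k+1) * d : ℕ) := by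
    have h1 : Nnum d (j+k) ≤ Mnum d (j+k+1) := Nat.sub_le _ _
    have h2 : Mnum d (j+k+1) ≤ 3 ^ d * 2 ^ ((j+k+1) * d) := Mnum_le d (j+k+1)
    exact_mod_cast le_trans h1 h2
  have hW0 : (0:ℝ) ≤ (2:ℝ) ^ ((((j:ℝ)+k) - j) * (β * p)) :=
    Real.rpow_nonneg (by norm_num) _
  have hjk : (((j+k:ℕ):ℝ)) = (j:ℝ) + k := by push_cast; ring
  rw [hjk]
  calc (2:ℝ) ^ ((((j:ℝ)+k) - j) * (β * p)) * (Nnum d (j+k) : ℝ)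
      ≤ (2:ℝ) ^ ((((j:ℝ)+k) - j) * (β * p)) * (3 ^ d * 2 ^ ((j+k+1) * d : ℕ)) :=
        mul_le_mul_of_nonneg_left hN hW0
    _ = 3 ^ d * 2 ^ d * 2 ^ ((j:ℝ) * d) * ((2:ℝ) ^ ((d:ℝ) + β * p)) ^ ((j+k) - j) := by
        have e1 : ((2:ℝ) ^ ((j+k+1) * d : ℕ)) = (2:ℝ) ^ ((((j:ℝ)+k+1)) * d) := by
          rw [two_rpow_natCast_mul]; push_cast; ring_nf
        have e2 : ((2:ℝ) ^ d) = (2:ℝ) ^ ((d:ℕ):ℝ) := (Real.rpow_natCast 2 d).symm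
        have e3 : ((2:ℝ) ^ ((d:ℝ) + β * p)) ^ ((j+k) - j) =
            (2:ℝ) ^ (((d:ℝ) + β * p) * ((j+k)-j : ℕ)) := by
          rw [← Real.rpow_natCast ((2:ℝ) ^ ((d:ℝ) + β * p)) ((j+k)-j),
            ← Real.rpow_mul (by norm_num)]
        have e4 : (((j+k)-j : ℕ) : ℝ) = (k:ℝ) := by
          congr 1
          omega
        rw [e1, e2, e3, e4]
        calc (2:ℝ) ^ ((((j:ℝ)+k) - j) * (β * p)) * (3 ^ d * 2 ^ ((((j:ℝ)+k+1)) * d))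
            = 3 ^ d * ((2:ℝ) ^ ((((j:ℝ)+k) - j) * (β * p)) * 2 ^ ((((j:ℝ)+k+1)) * d)) := by
              ring
          _ = 3 ^ d * (2:ℝ) ^ ((((j:ℝ)+k) - j) * (β * p) + (((j:ℝ)+k+1)) * d) := by
              rw [← Real.rpow_add two_pos]
          _ = 3 ^ d * (2:ℝ) ^ (((d:ℕ):ℝ) + ((j:ℝ) * d + ((d:ℝ) + β * p) * (k:ℝ))) := by
              congr 1
              push_cast
              ring
          _ = 3 ^ d * ((2:ℝ) ^ ((d:ℕ):ℝ) * ((2:ℝ) ^ ((j:ℝ) * d) * (2:ℝ) ^ (((d:ℝ) + β * p) * (k:ℝ)))) := by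
              rw [Real.rpow_add two_pos, Real.rpow_add two_pos]
          _ = 3 ^ d * (2:ℝ) ^ ((d:ℕ):ℝ) * (2:ℝ) ^ ((j:ℝ) * d) * (2:ℝ) ^ (((d:ℝ) + β * p) * (k:ℝ)) := by
              ring

lemma geom_partial_le {r : ℝ} (hr0 : 0 ≤ r) (hr1 : r < 1) (n : ℕ) :
    ∑ k ∈ Finset.range n, r ^ k ≤ (1 - r)⁻¹ := by
  have hsummable : Summable fun k : ℕ => r ^ k := summable_geometric_of_lt_one hr0 hr1
  calc ∑ k ∈ Finset.range n, r ^ k ≤ ∑' k : ℕ, r ^ k :=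
        Summable.sum_le_tsum _ (fun k _ => pow_nonneg hr0 k) hsummable
    _ = (1 - r)⁻¹ := tsum_geometric_of_lt_one hr0 hr1

/-- master lemma. For `d ∈ ℕ`, `p ∈ (0,∞)` and `β < -d/p` there is a
constant `C > 0` depending only on `d`, `β`, `p` such that for every family
`(ξ_{j,t,m})` of reals, every `j` and `t`,
`Z_{j,t} = (∑_m (1+‖m‖_∞/2^j)^{βp} |ξ_{j,t,m}|^p)^{1/p} ≤ C · 2^{jd/p} · Ξ^{1/p}`. -/
theorem stmt0 (d : ℕ) (hd : 0 < d) (p β : ℝ) (hp : 0 < p)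
    (hβ : β < -((d : ℝ) / p)) :
    ∃ C : ℝ, 0 < C ∧
      ∀ φ : ℕ → Fin d → ℤ, Function.Bijective φ →
        Monotone (fun τ => znorm (φ τ)) →
        ∀ ξ : ℕ → (Fin d → Bool) → (Fin d → ℤ) → ℝ,
          ∀ (j : ℕ) (t : Fin d → Bool),
            (∑' m : Fin d → ℤ,
                ENNReal.ofReal ((1 + znorm m / 2 ^ j) ^ (β * p) * |ξ j t m| ^ p)) ^ (1 / p)
              ≤ ENNReal.ofReal C *
                  ENNReal.ofReal ((2 : ℝ) ^ ((j : ℝ) * d / p)) *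
                  XiQ d p φ ξ ^ (1 / p) := by
  have hd0 : (0:ℝ) < d := by exact_mod_cast hd
  have hβp : β * p < -(d : ℝ) := by
    have h := mul_lt_mul_of_pos_right hβ hp
    rwa [neg_mul, div_mul_cancel₀ _ (ne_of_gt hp)] at h
  have hβp0 : β * p ≤ 0 := by linarith
  set r : ℝ := (2 : ℝ) ^ ((d : ℝ) + β * p) with hrdef
  have hr0 : 0 < r := Real.rpow_pos_of_pos two_pos _
  have hr1 : r < 1 := Real.rpow_lt_one_of_one_lt_of_neg one_lt_two (by linarith)
  have hinv : 0 < (1 - r)⁻¹ := inv_pos.mpr (by linarith)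
  set Ctot : ℝ := 3 ^ d + 3 ^ d * 2 ^ d * (1 - r)⁻¹ with hCdef
  have hCtot : 0 < Ctot := by positivity
  refine ⟨Ctot ^ (1 / p), Real.rpow_pos_of_pos hCtot _, ?_⟩
  intro φ hφ hmono ξ j t
  set Xi := XiQ d p φ ξ with hXidef
  set f : ℕ → ℝ≥0∞ := fun τ =>
    ENNReal.ofReal ((1 + znorm (φ τ) / 2 ^ j) ^ (β * p) * |ξ j t (φ τ)| ^ p) with hfdef
  have hu0 : ∀ τ : ℕ, (0:ℝ) ≤ |ξ j t (φ τ)| ^ p := fun τ =>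
    Real.rpow_nonneg (abs_nonneg _) p
  have hbase1 : ∀ τ : ℕ, (1:ℝ) ≤ 1 + znorm (φ τ) / 2 ^ j := by
    intro τ
    have h1 : (0:ℝ) ≤ znorm (φ τ) / 2 ^ j :=
      div_nonneg (znorm_nonneg' _) (by positivity)
    linarith
  -- lower bounds on Xi
  have hXiA : ENNReal.ofReal ((Mnum d j : ℝ)⁻¹ *
      ∑ τ ∈ Finset.range (Mnum d j), |ξ j t (φ τ)| ^ p) ≤ Xi := by
    have h1 := le_iSup₂ (f := fun (t' : Fin d → Bool) (j' : ℕ) =>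
      (ENNReal.ofReal ((Mnum d j' : ℝ)⁻¹ *
          ∑ τ ∈ Finset.range (Mnum d j'), |ξ j' t' (φ τ)| ^ p) +
        ⨆ ℓ : ℕ, ⨆ _ : j' ≤ ℓ,
          ENNReal.ofReal ((Nnum d ℓ : ℝ)⁻¹ *
            ∑ τ ∈ Finset.Ico (Mnum d ℓ) (Mnum d (ℓ + 1)), |ξ j' t' (φ τ)| ^ p))) t j
    exact le_trans le_self_add h1
  have hXiB : ∀ ℓ : ℕ, j ≤ ℓ → ENNReal.ofReal ((Nnum d ℓ : ℝ)⁻¹ *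
      ∑ τ ∈ Finset.Ico (Mnum d ℓ) (Mnum d (ℓ + 1)), |ξ j t (φ τ)| ^ p) ≤ Xi := by
    intro ℓ hℓ
    have h2 := le_iSup₂ (f := fun (ℓ' : ℕ) (_ : j ≤ ℓ') =>
      ENNReal.ofReal ((Nnum d ℓ' : ℝ)⁻¹ *
        ∑ τ ∈ Finset.Ico (Mnum d ℓ') (Mnum d (ℓ' + 1)), |ξ j t (φ τ)| ^ p)) ℓ hℓ
    have h3 := le_trans h2 (le_add_self (a := ⨆ ℓ' : ℕ, ⨆ _ : j ≤ ℓ',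
      ENNReal.ofReal ((Nnum d ℓ' : ℝ)⁻¹ *
        ∑ τ ∈ Finset.Ico (Mnum d ℓ') (Mnum d (ℓ' + 1)), |ξ j t (φ τ)| ^ p))
      (b := ENNReal.ofReal ((Mnum d j : ℝ)⁻¹ *
          ∑ τ ∈ Finset.range (Mnum d j), |ξ j t (φ τ)| ^ p)))
    have h1 := le_iSup₂ (f := fun (t' : Fin d → Bool) (j' : ℕ) =>
      (ENNReal.ofReal ((Mnum d j' : ℝ)⁻¹ *
          ∑ τ ∈ Finset.range (Mnum d j'), |ξ j' t' (φ τ)| ^ p) +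
        ⨆ ℓ : ℕ, ⨆ _ : j' ≤ ℓ,
          ENNReal.ofReal ((Nnum d ℓ : ℝ)⁻¹ *
            ∑ τ ∈ Finset.Ico (Mnum d ℓ) (Mnum d (ℓ + 1)), |ξ j' t' (φ τ)| ^ p))) t j
    exact le_trans h3 h1
  -- block bound for the initial block
  have hblock0 : ∑ τ ∈ Finset.range (Mnum d j), f τ ≤
      ENNReal.ofReal ((3:ℝ) ^ d * 2 ^ ((j:ℝ) * d)) * Xi := by
    have hM0 : (0:ℝ) < (Mnum d j : ℝ) := by exact_mod_cast Mnum_pos d j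
    calc ∑ τ ∈ Finset.range (Mnum d j), f τ
        ≤ ∑ τ ∈ Finset.range (Mnum d j), ENNReal.ofReal (|ξ j t (φ τ)| ^ p) := by
          refine Finset.sum_le_sum fun τ _ => ?_
          apply ENNReal.ofReal_le_ofReal
          have hw : (1 + znorm (φ τ) / 2 ^ j) ^ (β * p) ≤ 1 :=
            Real.rpow_le_one_of_one_le_of_nonpos (hbase1 τ) hβp0
          calc (1 + znorm (φ τ) / 2 ^ j) ^ (β * p) * |ξ j t (φ τ)| ^ p
              ≤ 1 * |ξ j t (φ τ)| ^ p := mul_le_mul_of_nonneg_right hw (hu0 τ)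
            _ = |ξ j t (φ τ)| ^ p := one_mul _
      _ = ENNReal.ofReal (∑ τ ∈ Finset.range (Mnum d j), |ξ j t (φ τ)| ^ p) :=
          (ENNReal.ofReal_sum_of_nonneg fun τ _ => hu0 τ).symm
      _ = ENNReal.ofReal ((Mnum d j : ℝ) * ((Mnum d j : ℝ)⁻¹ *
            ∑ τ ∈ Finset.range (Mnum d j), |ξ j t (φ τ)| ^ p)) := by
          rw [← mul_assoc, mul_inv_cancel₀ (ne_of_gt hM0), one_mul]
      _ = ENNReal.ofReal ((Mnum d j : ℝ)) * ENNReal.ofReal ((Mnum d j : ℝ)⁻¹ *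
            ∑ τ ∈ Finset.range (Mnum d j), |ξ j t (φ τ)| ^ p) :=
          ENNReal.ofReal_mul (le_of_lt hM0)
      _ ≤ ENNReal.ofReal ((3:ℝ) ^ d * 2 ^ ((j:ℝ) * d)) * Xi := by
          refine mul_le_mul' (ENNReal.ofReal_le_ofReal ?_) hXiA
          have h1 : (Mnum d j : ℝ) ≤ ((3 ^ d * 2 ^ (j * d) : ℕ) : ℝ) := by
            exact_mod_cast Mnum_le d j
          refine le_trans h1 (le_of_eq ?_)
          push_cast
          rw [two_rpow_natCast_mul]
  -- block bound for the shells
  have hblockS : ∀ ℓ : ℕ, j ≤ ℓ →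
      ∑ τ ∈ Finset.Ico (Mnum d ℓ) (Mnum d (ℓ + 1)), f τ ≤
        ENNReal.ofReal ((3:ℝ) ^ d * 2 ^ d * 2 ^ ((j:ℝ) * d) * r ^ (ℓ - j)) * Xi := by
    intro ℓ hℓ
    have hN0 : (0:ℝ) < (Nnum d ℓ : ℝ) := by exact_mod_cast Nnum_pos hd ℓ
    set W : ℝ := (2:ℝ) ^ (((ℓ:ℝ) - j) * (β * p)) with hWdef
    have hW0 : 0 ≤ W := Real.rpow_nonneg (by norm_num) _
    have hwW : ∀ τ ∈ Finset.Ico (Mnum d ℓ) (Mnum d (ℓ + 1)),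
        (1 + znorm (φ τ) / 2 ^ j) ^ (β * p) ≤ W := by
      intro τ hτ
      have hτℓ : Mnum d ℓ ≤ τ := (Finset.mem_Ico.mp hτ).1
      have h2l : (2:ℝ) ^ ℓ ≤ znorm (φ τ) := znorm_lb φ hφ.injective hmono hτℓ
      have hbase2 : (2:ℝ) ^ ((ℓ:ℝ) - j) ≤ 1 + znorm (φ τ) / 2 ^ j := by
        have e1 : (2:ℝ) ^ ((ℓ:ℝ) - j) = (2:ℝ) ^ ℓ / (2:ℝ) ^ j := by
          rw [Real.rpow_sub two_pos, Real.rpow_natCast, Real.rpow_natCast]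
        rw [e1]
        have h2 : (2:ℝ) ^ ℓ / (2:ℝ) ^ j ≤ znorm (φ τ) / 2 ^ j :=
          (div_le_div_iff_of_pos_right (by positivity)).mpr h2l
        linarith [h2]
      have hbpos : (0:ℝ) < (2:ℝ) ^ ((ℓ:ℝ) - j) := Real.rpow_pos_of_pos two_pos _
      calc (1 + znorm (φ τ) / 2 ^ j) ^ (β * p)
          ≤ ((2:ℝ) ^ ((ℓ:ℝ) - j)) ^ (β * p) :=
            Real.rpow_le_rpow_of_nonpos hbpos hbase2 hβp0
        _ = W := by rw [hWdef, ← Real.rpow_mul (by norm_num)]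
    calc ∑ τ ∈ Finset.Ico (Mnum d ℓ) (Mnum d (ℓ + 1)), f τ
        ≤ ∑ τ ∈ Finset.Ico (Mnum d ℓ) (Mnum d (ℓ + 1)),
            ENNReal.ofReal (W * |ξ j t (φ τ)| ^ p) := by
          refine Finset.sum_le_sum fun τ hτ => ?_
          exact ENNReal.ofReal_le_ofReal
            (mul_le_mul_of_nonneg_right (hwW τ hτ) (hu0 τ))
      _ = ENNReal.ofReal (W * ∑ τ ∈ Finset.Ico (Mnum d ℓ) (Mnum d (ℓ + 1)),
            |ξ j t (φ τ)| ^ p) := by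
          rw [Finset.mul_sum]
          exact (ENNReal.ofReal_sum_of_nonneg fun τ _ =>
            mul_nonneg hW0 (hu0 τ)).symm
      _ = ENNReal.ofReal (W * (Nnum d ℓ : ℝ) * ((Nnum d ℓ : ℝ)⁻¹ *
            ∑ τ ∈ Finset.Ico (Mnum d ℓ) (Mnum d (ℓ + 1)), |ξ j t (φ τ)| ^ p)) := by
          congr 1
          field_simp
      _ = ENNReal.ofReal (W * (Nnum d ℓ : ℝ)) * ENNReal.ofReal ((Nnum d ℓ : ℝ)⁻¹ *
            ∑ τ ∈ Finset.Ico (Mnum d ℓ) (Mnum d (ℓ + 1)), |ξ j t (φ τ)| ^ p) :=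
          ENNReal.ofReal_mul (mul_nonneg hW0 (le_of_lt hN0))
      _ ≤ ENNReal.ofReal ((3:ℝ) ^ d * 2 ^ d * 2 ^ ((j:ℝ) * d) * r ^ (ℓ - j)) * Xi := by
          refine mul_le_mul' (ENNReal.ofReal_le_ofReal ?_) (hXiB ℓ hℓ)
          rw [hWdef, hrdef]
          exact shell_real_bound d p β j ℓ hℓ
  -- induction over blocks
  have hmain : ∀ n : ℕ, ∑ τ ∈ Finset.range (Mnum d (j + n)), f τ ≤
      ENNReal.ofReal ((3:ℝ) ^ d * 2 ^ ((j:ℝ) * d) +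
        ∑ k ∈ Finset.range n, (3:ℝ) ^ d * 2 ^ d * 2 ^ ((j:ℝ) * d) * r ^ k) * Xi := by
    intro n
    induction n with
    | zero => simpa using hblock0
    | succ n ih =>
      have hsplit : ∑ τ ∈ Finset.range (Mnum d (j + (n+1))), f τ =
          ∑ τ ∈ Finset.range (Mnum d (j + n)), f τ +
          ∑ τ ∈ Finset.Ico (Mnum d (j + n)) (Mnum d (j + n + 1)), f τ := by
        have hidx : j + (n + 1) = j + n + 1 := by omega
        rw [hidx, Finset.range_eq_Ico,
          ← Finset.sum_Ico_consecutive f (Nat.zero_le (Mnum d (j + n)))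
            (Mnum_mono d (by omega : j + n ≤ j + n + 1)), ← Finset.range_eq_Ico]
      rw [hsplit]
      have hS := hblockS (j + n) (by omega)
      have hkn : j + n - j = n := by omega
      rw [hkn] at hS
      calc ∑ τ ∈ Finset.range (Mnum d (j + n)), f τ +
            ∑ τ ∈ Finset.Ico (Mnum d (j + n)) (Mnum d (j + n + 1)), f τ
          ≤ ENNReal.ofReal ((3:ℝ) ^ d * 2 ^ ((j:ℝ) * d) +
              ∑ k ∈ Finset.range n, (3:ℝ) ^ d * 2 ^ d * 2 ^ ((j:ℝ) * d) * r ^ k) * Xi +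
            ENNReal.ofReal ((3:ℝ) ^ d * 2 ^ d * 2 ^ ((j:ℝ) * d) * r ^ n) * Xi :=
            add_le_add ih hS
        _ = ENNReal.ofReal ((3:ℝ) ^ d * 2 ^ ((j:ℝ) * d) +
              ∑ k ∈ Finset.range (n+1), (3:ℝ) ^ d * 2 ^ d * 2 ^ ((j:ℝ) * d) * r ^ k) * Xi := by
            have hg : (0:ℝ) ≤ ∑ k ∈ Finset.range n,
                (3:ℝ) ^ d * 2 ^ d * 2 ^ ((j:ℝ) * d) * r ^ k := by
              refine Finset.sum_nonneg fun k _ => ?_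
              have : (0:ℝ) < r ^ k := pow_pos hr0 k
              positivity
            have hA : (0:ℝ) ≤ (3:ℝ) ^ d * 2 ^ ((j:ℝ) * d) +
                ∑ k ∈ Finset.range n, (3:ℝ) ^ d * 2 ^ d * 2 ^ ((j:ℝ) * d) * r ^ k := by
              positivity
            have hB : (0:ℝ) ≤ (3:ℝ) ^ d * 2 ^ d * 2 ^ ((j:ℝ) * d) * r ^ n := by
              have : (0:ℝ) < r ^ n := pow_pos hr0 n
              positivity
            rw [← add_mul, ← ENNReal.ofReal_add hA hB]
            congr 2
            rw [Finset.sum_range_succ]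
            ring
  -- the total bound on partial sums
  have hpartial : ∀ n : ℕ, ∑ τ ∈ Finset.range n, f τ ≤
      ENNReal.ofReal (Ctot * 2 ^ ((j:ℝ) * d)) * Xi := by
    intro n
    calc ∑ τ ∈ Finset.range n, f τ ≤ ∑ τ ∈ Finset.range (Mnum d (j + n)), f τ :=
          Finset.sum_le_sum_of_subset (Finset.range_subset_range.mpr (le_Mnum hd j n))
      _ ≤ ENNReal.ofReal ((3:ℝ) ^ d * 2 ^ ((j:ℝ) * d) +
            ∑ k ∈ Finset.range n, (3:ℝ) ^ d * 2 ^ d * 2 ^ ((j:ℝ) * d) * r ^ k) * Xi :=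
          hmain n
      _ ≤ ENNReal.ofReal (Ctot * 2 ^ ((j:ℝ) * d)) * Xi := by
          refine mul_le_mul_left (ENNReal.ofReal_le_ofReal ?_) Xi
          have hgeo := geom_partial_le (le_of_lt hr0) hr1 n
          have hsum : ∑ k ∈ Finset.range n, (3:ℝ) ^ d * 2 ^ d * 2 ^ ((j:ℝ) * d) * r ^ k =
              (3:ℝ) ^ d * 2 ^ d * 2 ^ ((j:ℝ) * d) * ∑ k ∈ Finset.range n, r ^ k := by
            rw [Finset.mul_sum]
          rw [hsum, hCdef]
          have hpow : (0:ℝ) < (2:ℝ) ^ ((j:ℝ) * d) := Real.rpow_pos_of_pos two_pos _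
          have hx : (0:ℝ) ≤ (3:ℝ) ^ d * 2 ^ d * 2 ^ ((j:ℝ) * d) := by positivity
          have hmul := mul_le_mul_of_nonneg_left hgeo hx
          nlinarith [hmul]
  have htsum : ∑' τ : ℕ, f τ ≤ ENNReal.ofReal (Ctot * 2 ^ ((j:ℝ) * d)) * Xi :=
    ENNReal.tsum_le_of_sum_range_le hpartial
  have heq : (∑' m : Fin d → ℤ,
      ENNReal.ofReal ((1 + znorm m / 2 ^ j) ^ (β * p) * |ξ j t m| ^ p)) = ∑' τ : ℕ, f τ :=
    ((Equiv.ofBijective φ hφ).tsum_eq fun m =>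
      ENNReal.ofReal ((1 + znorm m / 2 ^ j) ^ (β * p) * |ξ j t m| ^ p)).symm
  rw [heq]
  have hp1 : (0:ℝ) ≤ 1 / p := by positivity
  calc (∑' τ : ℕ, f τ) ^ (1 / p)
      ≤ (ENNReal.ofReal (Ctot * 2 ^ ((j:ℝ) * d)) * Xi) ^ (1 / p) :=
        ENNReal.rpow_le_rpow htsum hp1
    _ = ENNReal.ofReal (Ctot * 2 ^ ((j:ℝ) * d)) ^ (1 / p) * Xi ^ (1 / p) :=
        ENNReal.mul_rpow_of_nonneg _ _ hp1
    _ = ENNReal.ofReal (Ctot ^ (1 / p)) *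
          ENNReal.ofReal ((2:ℝ) ^ ((j:ℝ) * d / p)) * Xi ^ (1 / p) := by
        have hpow : (0:ℝ) < (2:ℝ) ^ ((j:ℝ) * d) := Real.rpow_pos_of_pos two_pos _
        have e5 : ((2:ℝ) ^ ((j:ℝ) * d)) ^ (1/p) = (2:ℝ) ^ ((j:ℝ) * d / p) := by
          rw [← Real.rpow_mul (by norm_num : (0:ℝ) ≤ 2), mul_one_div]
        rw [ENNReal.ofReal_rpow_of_pos (mul_pos hCtot hpow),
          Real.mul_rpow (le_of_lt hCtot) (le_of_lt hpow), e5,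
          ENNReal.ofReal_mul (Real.rpow_nonneg (le_of_lt hCtot) _)]

end
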